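/- Let H be a finite simple graph and v a non-isolated vertex of H. Then I(Tr(H,v), −1/2) = −(1/4)·I(H_v, −1/2). -/

import Mathlib

open scoped Classical

/-- A finset of vertices is independent if no two of its members are adjacent. -/
def IsIndep {W : Type*} (G : SimpleGraph W) (s : Finset W) : Prop :=
  ∀ x ∈ s, ∀ y ∈ s, ¬ G.Adj x y

/-- A maximal independent set: independent and not properly contained in another
independent set. -/
def IsMaxIndep {W : Type*} (G : SimpleGraph W) (s : Finset W) : Prop :=
  IsIndep G s ∧ ∀ t : Finset W, IsIndep G t → s ⊆ t → t = s

/-- The independence number `α(G)`: the maximum size of an independent set. -/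
noncomputable def indepNum {W : Type*} (G : SimpleGraph W) [Fintype W] : ℕ :=
  sSup {n | ∃ s : Finset W, IsIndep G s ∧ s.card = n}

/-- Trung's construction `Tr(H, v)`: three new vertices `a = Sum.inr 0`, `b = Sum.inr 1`,
`c = Sum.inr 2` are added to `H`; `c` is joined to `b` and to every neighbor of `v`,
`b` is joined to `a`, and `a` is joined to `v`. -/
def Tr {V : Type*} (H : SimpleGraph V) (v : V) : SimpleGraph (V ⊕ Fin 3) :=
  SimpleGraph.fromRel (fun x y =>
    match x, y with
    | Sum.inl x, Sum.inl y => H.Adj x y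
    | Sum.inl x, Sum.inr i => (i = 0 ∧ x = v) ∨ (i = 2 ∧ H.Adj x v)
    | Sum.inr i, Sum.inr j => (i = 0 ∧ j = 1) ∨ (i = 1 ∧ j = 2)
    | _, _ => False)

/-- The set of vertices remaining after deleting the closed neighborhood `N[F]`
of a set `F` of vertices. -/
def offNbhd {V : Type*} (G : SimpleGraph V) (F : Set V) : Set V :=
  {w | w ∉ F ∧ ∀ u ∈ F, ¬ G.Adj u w}

/-- `G_F`: the induced subgraph of `G` on `V(G) \ N[F]`. -/
def delNbhd {V : Type*} (G : SimpleGraph V) (F : Set V) : SimpleGraph (offNbhd G F) :=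
  G.induce (offNbhd G F)

/-- `H_v = H \ N[v]`. -/
def delVert {V : Type*} (H : SimpleGraph V) (v : V) : SimpleGraph (offNbhd H {v}) :=
  delNbhd H {v}

/-- The independence polynomial `I(G, x) = Σ_i a_i x^i` of a finite graph,
as a polynomial over `ℚ`. -/
noncomputable def indepPoly {W : Type*} (G : SimpleGraph W) [Fintype W] : Polynomial ℚ :=
  ∑ s ∈ Finset.univ.filter (fun s : Finset W => IsIndep G s),
    (Polynomial.X : Polynomial ℚ) ^ s.card

/-- `a_i(G)`: the number of independent sets of size `i`, indexed by `ℤ`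
(so that it is `0` for `i < 0`). -/
noncomputable def numIndep {W : Type*} (G : SimpleGraph W) [Fintype W] (i : ℤ) : ℕ :=
  (Finset.univ.filter (fun s : Finset W => IsIndep G s ∧ (s.card : ℤ) = i)).card

/-- A finite graph is well-covered if every maximal independent set has size `α(G)`. -/
def WellCovered {W : Type*} (G : SimpleGraph W) [Fintype W] : Prop :=
  ∀ s : Finset W, IsMaxIndep G s → s.card = indepNum G

/-- A finite graph is a `W₂` graph if it has at least two vertices and every pair of
disjoint independent sets is contained in a pair of disjoint maximum independent sets. -/
def IsW2 {W : Type*} (G : SimpleGraph W) [Fintype W] : Prop :=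
  2 ≤ Fintype.card W ∧
    ∀ A B : Finset W, IsIndep G A → IsIndep G B → Disjoint A B →
      ∃ A' B' : Finset W, IsIndep G A' ∧ IsIndep G B' ∧ Disjoint A' B' ∧
        A ⊆ A' ∧ B ⊆ B' ∧ A'.card = indepNum G ∧ B'.card = indepNum G

/-!
An independent set of `Tr(H, v)` meets the new vertices `{a, b, c}` in `∅`, `{a}`, `{b}`, `{c}`
or `{a, c}`, and its trace `A` on `H` must satisfy, respectively: nothing, `v ∉ A`, nothing,
`A ∩ N(v) = ∅`, `A ∩ N[v] = ∅`. Hence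
`I(Tr) = (1 + x) I(H) + x I(H - v) + x I(H - N(v)) + x² I(H_v)`.
Splitting the independent sets of `H` and of `H - N(v)` according to whether they contain `v`
turns this into `I(Tr) = (1 + 2x) I(H) + x (1 + x) I(H_v)`, whose first term vanishes at
`x = -1/2`.
-/

open Finset Polynomial

theorem isIndep_induce_iff {V : Type*} (H : SimpleGraph V) (S : Set V) (t : Finset S) :
    IsIndep (H.induce S) t ↔ IsIndep H (t.map (Function.Embedding.subtype _)) := by
  simp [IsIndep]

section IndepPolyWith

variable {V : Type*} [Fintype V] (H : SimpleGraph V)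

noncomputable def indepPolyWith (P : Finset V → Prop) : ℚ[X] :=
  ∑ A ∈ univ.filter (fun A => IsIndep H A ∧ P A), X ^ A.card

theorem indepPolyWith_true : indepPolyWith H (fun _ => True) = indepPoly H := by
  simp [indepPolyWith, indepPoly]

theorem indepPolyWith_congr {P Q : Finset V → Prop} (h : ∀ A, IsIndep H A → (P A ↔ Q A)) :
    indepPolyWith H P = indepPolyWith H Q :=
  sum_congr (filter_congr fun A _ => and_congr_right (h A)) fun _ _ => rfl

theorem indepPolyWith_eq_add (P Q : Finset V → Prop) :
    indepPolyWith H P =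
      indepPolyWith H (fun A => Q A ∧ P A) + indepPolyWith H (fun A => ¬ Q A ∧ P A) := by
  simp only [indepPolyWith]
  rw [← sum_filter_add_sum_filter_not _ Q, filter_filter, filter_filter]
  congr 2 <;> ext A <;> simp only [mem_filter] <;> tauto

theorem indepPolyWith_subset_eq_indepPoly_induce (S : Set V) :
    indepPolyWith H (fun A => (A : Set V) ⊆ S) = indepPoly (H.induce S) := by
  symm
  refine sum_nbij' (fun t => t.map (Function.Embedding.subtype _))
    (fun A => A.subtype (· ∈ S)) ?_ ?_ ?_ ?_ ?_
  · intro t ht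
    simp only [mem_filter, mem_univ, true_and] at ht ⊢
    refine ⟨(isIndep_induce_iff H S t).mp ht, ?_⟩
    intro a ha
    obtain ⟨b, -, rfl⟩ := mem_map.mp ha
    exact b.2
  · intro A hA
    simp only [mem_filter, mem_univ, true_and] at hA ⊢
    rw [isIndep_induce_iff, subtype_map_of_mem hA.2]
    exact hA.1
  · intro t _
    ext a
    simp
  · intro A hA
    simp only [mem_filter, mem_univ, true_and] at hA
    exact subtype_map_of_mem hA.2
  · intro t _
    simp

end IndepPolyWith

theorem isIndep_disjSum_iff {α β : Type*} (G : SimpleGraph (α ⊕ β)) (A : Finset α)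
    (B : Finset β) :
    IsIndep G (A.disjSum B) ↔ IsIndep (G.comap Sum.inl) A ∧ IsIndep (G.comap Sum.inr) B ∧
      ∀ a ∈ A, ∀ b ∈ B, ¬ G.Adj (.inl a) (.inr b) := by
  refine ⟨fun h => ⟨fun a ha a' ha' => h _ (inl_mem_disjSum.2 ha) _ (inl_mem_disjSum.2 ha'),
    fun b hb b' hb' => h _ (inr_mem_disjSum.2 hb) _ (inr_mem_disjSum.2 hb'),
    fun a ha b hb => h _ (inl_mem_disjSum.2 ha) _ (inr_mem_disjSum.2 hb)⟩, ?_⟩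
  rintro ⟨hA, hB, hAB⟩ (a | b) hs (a' | b') hs'
  all_goals simp only [inl_mem_disjSum, inr_mem_disjSum] at hs hs'
  · exact hA a hs a' hs'
  · exact hAB a hs b' hs'
  · exact fun h => hAB a' hs' b hs h.symm
  · exact hB b hs b' hs'

theorem indepPoly_sum_eq_sum_disjSum {α β : Type*} [Fintype α] [Fintype β]
    (G : SimpleGraph (α ⊕ β)) :
    indepPoly G = ∑ B : Finset β,
      ∑ A ∈ univ.filter (fun A : Finset α => IsIndep G (A.disjSum B)), X ^ (A.card + B.card) := by
  simp only [indepPoly, sum_filter]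
  rw [← Finset.sumEquiv.symm.toEquiv.sum_comp, Fintype.sum_prod_type_right]
  simp [card_disjSum]

section Tr

variable {V : Type*} (H : SimpleGraph V) (v : V)

theorem tr_comap_inl : (Tr H v).comap Sum.inl = H := by
  ext x y
  simp only [Tr, SimpleGraph.comap_adj, SimpleGraph.fromRel_adj, ne_eq, Sum.inl.injEq]
  exact ⟨fun h => h.2.elim id H.adj_symm, fun h => ⟨h.ne, .inl h⟩⟩

theorem tr_adj_inl_inr (x : V) (i : Fin 3) :
    (Tr H v).Adj (.inl x) (.inr i) ↔ (i = 0 ∧ x = v) ∨ (i = 2 ∧ H.Adj x v) := by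
  simp [Tr]

theorem tr_adj_inr_inr (i j : Fin 3) :
    (Tr H v).Adj (.inr i) (.inr j) ↔
      (i = 0 ∧ j = 1) ∨ (i = 1 ∧ j = 2) ∨ (i = 1 ∧ j = 0) ∨ (i = 2 ∧ j = 1) := by
  fin_cases i <;> fin_cases j <;> simp [Tr]

theorem isIndep_tr_comap_inr_iff (B : Finset (Fin 3)) :
    IsIndep ((Tr H v).comap Sum.inr) B ↔ ¬ (0 ∈ B ∧ 1 ∈ B) ∧ ¬ (1 ∈ B ∧ 2 ∈ B) := by
  simp only [IsIndep, SimpleGraph.comap_adj, tr_adj_inr_inr]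
  refine ⟨fun h => ⟨fun ⟨h0, h1⟩ => h 0 h0 1 h1 (by decide),
    fun ⟨h1, h2⟩ => h 1 h1 2 h2 (by decide)⟩, ?_⟩
  rintro ⟨h01, h12⟩ i hi j hj (⟨rfl, rfl⟩ | ⟨rfl, rfl⟩ | ⟨rfl, rfl⟩ | ⟨rfl, rfl⟩) <;> tauto

theorem forall_not_tr_adj_inl_inr_iff (A : Finset V) (B : Finset (Fin 3)) :
    (∀ x ∈ A, ∀ i ∈ B, ¬ (Tr H v).Adj (.inl x) (.inr i)) ↔
      (0 ∈ B → v ∉ A) ∧ (2 ∈ B → ∀ u ∈ A, ¬ H.Adj v u) := by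
  simp only [tr_adj_inl_inr]
  refine ⟨fun h => ⟨fun h0 hv => h v hv 0 h0 (.inl ⟨rfl, rfl⟩),
    fun h2 u hu hadj => h u hu 2 h2 (.inr ⟨rfl, hadj.symm⟩)⟩, ?_⟩
  rintro ⟨h0, h2⟩ x hx i hi (⟨rfl, rfl⟩ | ⟨rfl, hadj⟩)
  · exact h0 hi hx
  · exact h2 hi x hx hadj.symm

theorem isIndep_tr_disjSum_iff (A : Finset V) (B : Finset (Fin 3)) :
    IsIndep (Tr H v) (A.disjSum B) ↔ IsIndep H A ∧ ¬ (0 ∈ B ∧ 1 ∈ B) ∧ ¬ (1 ∈ B ∧ 2 ∈ B) ∧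
      (0 ∈ B → v ∉ A) ∧ (2 ∈ B → ∀ u ∈ A, ¬ H.Adj v u) := by
  rw [isIndep_disjSum_iff, tr_comap_inl, isIndep_tr_comap_inr_iff,
    forall_not_tr_adj_inl_inr_iff, and_assoc]

end Tr

theorem coe_subset_offNbhd_singleton_iff {V : Type*} (H : SimpleGraph V) (v : V)
    (A : Finset V) : (A : Set V) ⊆ offNbhd H {v} ↔ v ∉ A ∧ ∀ u ∈ A, ¬ H.Adj v u := by
  simp only [Set.subset_def, offNbhd, mem_coe, Set.mem_ofPred_eq, Set.mem_singleton_iff,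
    forall_eq]
  exact ⟨fun h => ⟨fun hv => (h v hv).1 rfl, fun u hu => (h u hu).2⟩,
    fun h u hu => ⟨fun huv => h.1 (huv ▸ hu), h.2 u hu⟩⟩

section TrPoly

variable {V : Type*} [Fintype V] (H : SimpleGraph V) (v : V)

theorem indepPoly_tr_eq_sum : indepPoly (Tr H v) = ∑ B : Finset (Fin 3),
    if ¬ (0 ∈ B ∧ 1 ∈ B) ∧ ¬ (1 ∈ B ∧ 2 ∈ B) then
      X ^ B.card * indepPolyWith H (fun A => (0 ∈ B → v ∉ A) ∧ (2 ∈ B → ∀ u ∈ A, ¬ H.Adj v u))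
    else 0 := by
  rw [indepPoly_sum_eq_sum_disjSum]
  refine sum_congr rfl fun B _ => ?_
  simp only [isIndep_tr_disjSum_iff]
  split_ifs with hB
  · rw [indepPolyWith, mul_sum]
    refine sum_congr ?_ fun A _ => by ring
    ext A
    simp only [mem_filter, mem_univ, true_and]
    tauto
  · rw [filter_false_of_mem fun A _ h => hB ⟨h.2.1, h.2.2.1⟩, sum_empty]

theorem indepPoly_tr_eq_add : indepPoly (Tr H v) =
    indepPoly H + X * indepPolyWith H (fun A => v ∉ A) + X * indepPoly H +
      X * indepPolyWith H (fun A => ∀ u ∈ A, ¬ H.Adj v u) +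
      X ^ 2 * indepPolyWith H (fun A => v ∉ A ∧ ∀ u ∈ A, ¬ H.Adj v u) := by
  rw [indepPoly_tr_eq_sum,
    show (univ : Finset (Finset (Fin 3))) =
      {∅, {0}, {1}, {2}, {0, 1}, {0, 2}, {1, 2}, {0, 1, 2}} by decide]
  simp +decide [sum_insert, indepPolyWith_true, add_assoc]

theorem indepPoly_tr : indepPoly (Tr H v) =
    (1 + 2 * X) * indepPoly H + X * (1 + X) * indepPoly (delVert H v) := by
  have hsplit : indepPoly H = indepPolyWith H (v ∈ ·) + indepPolyWith H (v ∉ ·) := by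
    simpa [indepPolyWith_true] using indepPolyWith_eq_add H (fun _ => True) (v ∈ ·)
  have hnbr := indepPolyWith_eq_add H (fun A => ∀ u ∈ A, ¬ H.Adj v u) (v ∈ ·)
  -- an independent set containing `v` contains no neighbour of `v`
  have hmem : indepPolyWith H (fun A => v ∈ A ∧ ∀ u ∈ A, ¬ H.Adj v u) =
      indepPolyWith H (v ∈ ·) :=
    indepPolyWith_congr H fun A hA => ⟨And.left, fun h => ⟨h, hA v h⟩⟩
  have hdel : indepPolyWith H (fun A => v ∉ A ∧ ∀ u ∈ A, ¬ H.Adj v u) =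
      indepPoly (delVert H v) := by
    rw [delVert, delNbhd, ← indepPolyWith_subset_eq_indepPoly_induce]
    exact indepPolyWith_congr H fun A _ => (coe_subset_offNbhd_singleton_iff H v A).symm
  rw [indepPoly_tr_eq_add, hnbr, hmem, hdel, hsplit]
  ring

end TrPoly

theorem indepPoly_Tr_eval_neg_half_general {V : Type*} [Fintype V] (H : SimpleGraph V) (v : V) :
    (indepPoly (Tr H v)).eval (-(1 / 2) : ℚ) =
      -(1 / 4) * (indepPoly (delVert H v)).eval (-(1 / 2) : ℚ) := by
  rw [indepPoly_tr]
  norm_num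

theorem indepPoly_Tr_eval_neg_half {V : Type*} [Fintype V] (H : SimpleGraph V) (v : V)
    (hv : ∃ u, H.Adj v u) :
    (indepPoly (Tr H v)).eval (-(1 / 2) : ℚ) =
      -(1 / 4) * (indepPoly (delVert H v)).eval (-(1 / 2) : ℚ) :=
  indepPoly_Tr_eval_neg_half_general H v
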